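/- Let L be a finitely generated Moufang loop of class at most 2. Then the nuclearly-derived subloop L* of L (the smallest normal subloop of L whose quotient is a group, which here equals the subloop generated by all associators [c,d,e]) is a finite abelian group of exponent dividing 6; thus L is a central extension of the finitely generated group L/L* of nilpotence class at most 2 by a finite group of exponent dividing 6. -/
import Mathlib


/-- An inverse property loop: a set with multiplication, identity, and two-sided
inverses satisfying `a⁻¹(ax) = x = (xa)a⁻¹`. -/
class IPLoop (L : Type*) extends Mul L, One L, Inv L where
  one_mul : ∀ a : L, 1 * a = a
  mul_one : ∀ a : L, a * 1 = a
  inv_mul_cancel_left : ∀ a x : L, a⁻¹ * (a * x) = x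
  mul_inv_cancel_right : ∀ a x : L, (x * a) * a⁻¹ = x

namespace IPLoop

variable {L : Type*} [IPLoop L]

/-- Powers with natural number exponent, `c^(n+1) = c * c^n`. -/
def npow (c : L) : ℕ → L
  | 0 => 1
  | n + 1 => c * npow c n

instance : Pow L ℕ := ⟨npow⟩

/-- Powers with integer exponent. -/
def zpow (c : L) : ℤ → L
  | Int.ofNat n => c ^ n
  | Int.negSucc n => (c ^ (n + 1))⁻¹

instance : Pow L ℤ := ⟨zpow⟩

/-- The commutator `[c,d] = (dc)⁻¹(cd)`. -/
def comm (c d : L) : L := (d * c)⁻¹ * (c * d)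

/-- The associator `[c,d,e] = (c(de))⁻¹((cd)e)`. -/
def assoc (c d e : L) : L := (c * (d * e))⁻¹ * ((c * d) * e)

/-- Membership in the center `Z(L)`. -/
def inCenter (z : L) : Prop :=
  (∀ x : L, comm z x = 1) ∧
  ∀ x y : L, assoc z x y = 1 ∧ assoc x z y = 1 ∧ assoc x y z = 1

/-- The Moufang identity `((dc)e)c = d(c(ec))`. -/
def IsMoufang (L : Type*) [IPLoop L] : Prop :=
  ∀ c d e : L, ((d * c) * e) * c = d * (c * (e * c))

/-- A loop is of (central nilpotence) class at most 2 if every commutator and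
every associator lies in the center. -/
def ClassTwo (L : Type*) [IPLoop L] : Prop :=
  (∀ c d : L, inCenter (comm c d)) ∧ ∀ c d e : L, inCenter (assoc c d e)

/-- The order of an element: least `n > 0` with `c^n = 1` (or `0` if none). -/
noncomputable def ordOf (c : L) : ℕ := sInf {n : ℕ | 0 < n ∧ c ^ n = 1}

/-- The subloop generated by a subset `S`. -/
def subloopClosure (S : Set L) : Set L :=
  ⋂₀ {T : Set L | (1 : L) ∈ T ∧ (∀ x ∈ T, x⁻¹ ∈ T) ∧
      (∀ x ∈ T, ∀ y ∈ T, x * y ∈ T) ∧ S ⊆ T}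

end IPLoop

/- ============ development ============ -/
namespace IPLoop

variable {L : Type*} [IPLoop L]

section Basic

@[simp] theorem one_mul' (a : L) : 1 * a = a := one_mul a
@[simp] theorem mul_one' (a : L) : a * 1 = a := mul_one a
@[simp] theorem inv_mul_cancel_left' (a x : L) : a⁻¹ * (a * x) = x := inv_mul_cancel_left a x
@[simp] theorem mul_inv_cancel_right' (a x : L) : (x * a) * a⁻¹ = x := mul_inv_cancel_right a x

@[simp] theorem inv_mul_cancel' (a : L) : a⁻¹ * a = 1 := by
  have := inv_mul_cancel_left a (1 : L); simpa using this

@[simp] theorem mul_inv_cancel' (a : L) : a * a⁻¹ = 1 := by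
  have := mul_inv_cancel_right a (1 : L); simpa using this

@[simp] theorem inv_inv' (a : L) : a⁻¹⁻¹ = a := by
  have h := inv_mul_cancel_left (a⁻¹) a
  simpa using h

@[simp] theorem mul_inv_cancel_left'' (a x : L) : a * (a⁻¹ * x) = x := by
  have h := inv_mul_cancel_left (a⁻¹) x
  simpa using h

@[simp] theorem inv_mul_cancel_right'' (a x : L) : (x * a⁻¹) * a = x := by
  have h := mul_inv_cancel_right (a⁻¹) x
  simpa using h

theorem mul_left_cancel' {a x y : L} (h : a * x = a * y) : x = y := by
  have := congrArg (fun t => a⁻¹ * t) h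
  simpa using this

theorem mul_right_cancel' {a x y : L} (h : x * a = y * a) : x = y := by
  have := congrArg (fun t => t * a⁻¹) h
  simpa using this

@[simp] theorem one_inv' : (1 : L)⁻¹ = 1 := by
  have := inv_mul_cancel' (1 : L); simpa using this

theorem mul_inv_rev' (x y : L) : (x * y)⁻¹ = y⁻¹ * x⁻¹ := by
  have h1 : (x * y)⁻¹ * x = y⁻¹ := by
    have h := inv_mul_cancel_left (x*y) (y⁻¹)
    calc (x*y)⁻¹ * x = (x*y)⁻¹ * ((x*y)*y⁻¹) := by rw [mul_inv_cancel_right']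
    _ = y⁻¹ := by rw [inv_mul_cancel_left]
  calc (x*y)⁻¹ = ((x*y)⁻¹ * x) * x⁻¹ := by rw [mul_inv_cancel_right']
  _ = y⁻¹ * x⁻¹ := by rw [h1]

theorem eq_one_of_self_mul {W u : L} (h : W * u = W) : u = 1 := by
  have : W * u = W * 1 := by simpa using h
  exact mul_left_cancel' this

end Basic

end IPLoop

namespace IPLoop

variable {L : Type*} [IPLoop L]

section Central

theorem comm_eq_one_iff {a b : L} : comm a b = 1 ↔ a * b = b * a := by
  unfold comm
  constructor
  · intro h
    have := congrArg (fun t => (b*a) * t) h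
    simpa using this
  · intro h; rw [h]; simp

theorem assoc_eq_one_iff {a b c : L} : assoc a b c = 1 ↔ (a * b) * c = a * (b * c) := by
  unfold assoc
  constructor
  · intro h
    have := congrArg (fun t => (a*(b*c)) * t) h
    simpa using this
  · intro h; rw [h]; simp

theorem inCenter.comm {z : L} (hz : inCenter z) (x : L) : z * x = x * z :=
  comm_eq_one_iff.mp (hz.1 x)

theorem inCenter.comm' {z : L} (hz : inCenter z) (x : L) : x * z = z * x :=
  (inCenter.comm hz x).symm

theorem inCenter.assocL {z : L} (hz : inCenter z) (x y : L) : (z * x) * y = z * (x * y) :=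
  assoc_eq_one_iff.mp ((hz.2 x y).1)

theorem inCenter.assocM {z : L} (hz : inCenter z) (x y : L) : (x * z) * y = x * (z * y) :=
  assoc_eq_one_iff.mp ((hz.2 x y).2.1)

theorem inCenter.assocR {z : L} (hz : inCenter z) (x y : L) : (x * y) * z = x * (y * z) :=
  assoc_eq_one_iff.mp ((hz.2 x y).2.2)

/-- move a central factor past a right multiplication -/
theorem inCenter.swapR {z : L} (hz : inCenter z) (W v : L) : (W * z) * v = (W * v) * z := by
  rw [hz.assocM, hz.comm, ← hz.assocR]

/-- absorb a central factor from inside -/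
theorem inCenter.pullL {z : L} (hz : inCenter z) (v W : L) : v * (W * z) = (v * W) * z := by
  rw [hz.assocR]

theorem inCenter.merge {z : L} (hz : inCenter z) (W u : L) : (W * u) * z = W * (u * z) := by
  rw [hz.assocR]

theorem inCenter_one : inCenter (1 : L) := by
  refine ⟨fun x => ?_, fun x y => ⟨?_, ?_, ?_⟩⟩
  · rw [comm_eq_one_iff]; simp
  · rw [assoc_eq_one_iff]; simp
  · rw [assoc_eq_one_iff]; simp
  · rw [assoc_eq_one_iff]; simp

theorem inCenter_mul {z w : L} (hz : inCenter z) (hw : inCenter w) : inCenter (z * w) := by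
  refine ⟨fun x => ?_, fun x y => ⟨?_, ?_, ?_⟩⟩
  · rw [comm_eq_one_iff]
    calc (z*w)*x = z*(w*x) := hz.assocL w x
    _ = z*(x*w) := by rw [hw.comm x]
    _ = (z*x)*w := (hz.assocL x w).symm
    _ = (x*z)*w := by rw [hz.comm x]
    _ = x*(z*w) := hz.assocM x w
  · rw [assoc_eq_one_iff]
    calc ((z*w)*x)*y = (z*(w*x))*y := by rw [hz.assocL]
    _ = z*((w*x)*y) := hz.assocL _ _
    _ = z*(w*(x*y)) := by rw [hw.assocL]
    _ = (z*w)*(x*y) := (hz.assocL _ _).symm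
  · rw [assoc_eq_one_iff]
    calc (x*(z*w))*y = ((x*z)*w)*y := by rw [hz.assocM]
    _ = (x*z)*(w*y) := hw.assocM _ _
    _ = x*(z*(w*y)) := hz.assocM _ _
    _ = x*((z*w)*y) := by rw [hz.assocL]
  · rw [assoc_eq_one_iff]
    calc (x*y)*(z*w) = ((x*y)*z)*w := (hw.assocR _ _).symm
    _ = (x*(y*z))*w := by rw [hz.assocR]
    _ = x*((y*z)*w) := hw.assocR _ _
    _ = x*(y*(z*w)) := by rw [hw.assocR]

theorem inCenter_inv {z : L} (hz : inCenter z) : inCenter z⁻¹ := by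
  have hcomm : ∀ x : L, z⁻¹ * x = x * z⁻¹ := by
    intro x
    have h1 : z * (x * z⁻¹) = x := by rw [hz.comm]; simp
    calc z⁻¹ * x = z⁻¹ * (z * (x * z⁻¹)) := by rw [h1]
    _ = x * z⁻¹ := by simp
  have hR : ∀ x y : L, (x*y)*z⁻¹ = x*(y*z⁻¹) := by
    intro x y
    have h2 : (x*(y*z⁻¹))*z = x*y := by
      rw [hz.assocR]; simp
    calc (x*y)*z⁻¹ = ((x*(y*z⁻¹))*z)*z⁻¹ := by rw [h2]
    _ = x*(y*z⁻¹) := by simp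
  have hL : ∀ x y : L, (z⁻¹*x)*y = z⁻¹*(x*y) := by
    intro x y
    have h2 : z * ((z⁻¹*x)*y) = x*y := by
      rw [← hz.assocL]; simp
    calc (z⁻¹*x)*y = z⁻¹*(z*((z⁻¹*x)*y)) := by simp
    _ = z⁻¹*(x*y) := by rw [h2]
  have hM : ∀ x y : L, (x*z⁻¹)*y = x*(z⁻¹*y) := by
    intro x y
    calc (x*z⁻¹)*y = (z⁻¹*x)*y := by rw [hcomm x]
    _ = z⁻¹*(x*y) := hL x y
    _ = (x*y)*z⁻¹ := hcomm _
    _ = x*(y*z⁻¹) := hR x y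
    _ = x*(z⁻¹*y) := by rw [hcomm y]
  refine ⟨fun x => comm_eq_one_iff.mpr (hcomm x), fun x y =>
    ⟨assoc_eq_one_iff.mpr (hL x y), assoc_eq_one_iff.mpr (hM x y), assoc_eq_one_iff.mpr (hR x y)⟩⟩

/-- cancel identical normal forms with central corrections -/
theorem central_cancel {W u v : L} (h : W * u = W * v) : u = v := mul_left_cancel' h

end Central

end IPLoop

namespace IPLoop

variable {L : Type*} [IPLoop L]

section MoufangL

theorem expand_assoc (x y z : L) : (x*y)*z = (x*(y*z)) * assoc x y z := by
  unfold assoc; rw [mul_inv_cancel_left'']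

theorem expand_assoc' (x y z : L) : x*(y*z) = ((x*y)*z) * (assoc x y z)⁻¹ := by
  rw [expand_assoc x y z, mul_inv_cancel_right']

theorem expand_comm (x y : L) : x*y = (y*x) * comm x y := by
  unfold comm; rw [mul_inv_cancel_left'']

theorem inv_shift_cancel {z : L} (hz : inCenter z) (P Q : L) :
    (P*z)⁻¹ * (Q*z) = P⁻¹ * Q := by
  have hzi := inCenter_inv hz
  calc (P*z)⁻¹ * (Q*z) = (z⁻¹*P⁻¹) * (Q*z) := by rw [mul_inv_rev']
  _ = z⁻¹*(P⁻¹*(Q*z)) := hzi.assocL _ _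
  _ = z⁻¹*((P⁻¹*Q)*z) := by rw [hz.pullL]
  _ = z⁻¹*(z*(P⁻¹*Q)) := by rw [hz.comm (P⁻¹*Q)]
  _ = P⁻¹*Q := by simp

theorem assoc_shift1 {z : L} (hz : inCenter z) (x d e : L) :
    assoc (x*z) d e = assoc x d e := by
  unfold assoc
  rw [hz.swapR x d, hz.swapR (x*d) e, hz.swapR x (d*e), inv_shift_cancel hz]

theorem assoc_shift2 {z : L} (hz : inCenter z) (c y e : L) :
    assoc c (y*z) e = assoc c y e := by
  unfold assoc
  rw [hz.swapR y e, hz.pullL c (y*e), hz.pullL c y, hz.swapR (c*y) e, inv_shift_cancel hz]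

theorem assoc_shift3 {z : L} (hz : inCenter z) (c d w : L) :
    assoc c d (w*z) = assoc c d w := by
  unfold assoc
  rw [hz.pullL d w, hz.pullL c (d*w), hz.pullL (c*d) w, inv_shift_cancel hz]

theorem comm_shift1 {z : L} (hz : inCenter z) (x y : L) :
    comm (x*z) y = comm x y := by
  unfold comm
  rw [hz.pullL y x, hz.swapR x y, inv_shift_cancel hz]

theorem comm_shift2 {z : L} (hz : inCenter z) (x y : L) :
    comm x (y*z) = comm x y := by
  unfold comm
  rw [hz.swapR y x, hz.pullL x y, inv_shift_cancel hz]

section withM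
variable {hM : IsMoufang L} {h2 : ClassTwo L}

theorem flex (hM : IsMoufang L) (c e : L) : (c*e)*c = c*(e*c) := by
  have := hM c 1 e
  simpa using this

theorem leftM (hM : IsMoufang L) (c d e : L) : c*(e*(c*d)) = ((c*e)*c)*d := by
  have h := hM c⁻¹ d⁻¹ e⁻¹
  have h2 := congrArg (fun t => t⁻¹) h
  simpa [mul_inv_rev'] using h2

theorem F2L (hM : IsMoufang L) (h2 : ClassTwo L) (c d e : L) :
    assoc d (c*e) c * assoc d c e = 1 := by
  have hA1 := h2.2 d c e
  have hA2 := h2.2 d (c*e) c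
  apply eq_one_of_self_mul (W := d*((c*e)*c))
  calc (d*((c*e)*c)) * (assoc d (c*e) c * assoc d c e)
      = ((d*((c*e)*c)) * assoc d (c*e) c) * assoc d c e := (hA1.merge _ _).symm
  _ = ((d*(c*e))*c) * assoc d c e := by rw [← expand_assoc d (c*e) c]
  _ = ((d*(c*e))*assoc d c e)*c := (hA1.swapR _ _).symm
  _ = ((d*c)*e)*c := by rw [← expand_assoc d c e]
  _ = d*(c*(e*c)) := hM c d e
  _ = d*((c*e)*c) := by rw [← flex hM c e]

theorem F3L (hM : IsMoufang L) (h2 : ClassTwo L) (c d e : L) :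
    assoc d c (e*c) * assoc (d*c) e c = 1 := by
  have hA1 := h2.2 d c (e*c)
  apply eq_one_of_self_mul (W := d*(c*(e*c)))
  calc (d*(c*(e*c))) * (assoc d c (e*c) * assoc (d*c) e c)
      = ((d*(c*(e*c))) * assoc d c (e*c)) * assoc (d*c) e c := ((h2.2 (d*c) e c).merge _ _).symm
  _ = ((d*c)*(e*c)) * assoc (d*c) e c := by rw [← expand_assoc d c (e*c)]
  _ = ((d*c)*e)*c := by rw [← expand_assoc (d*c) e c]
  _ = d*(c*(e*c)) := hM c d e

theorem F1L (hM : IsMoufang L) (h2 : ClassTwo L) (c d e : L) :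
    assoc e c d * assoc c (e*c) d = 1 := by
  have hA1 := inCenter_inv (h2.2 e c d)
  have hA2 := inCenter_inv (h2.2 c (e*c) d)
  have key : (((c*e)*c)*d) * ((assoc c (e*c) d)⁻¹ * (assoc e c d)⁻¹) = ((c*e)*c)*d := by
    calc (((c*e)*c)*d) * ((assoc c (e*c) d)⁻¹ * (assoc e c d)⁻¹)
        = ((((c*e)*c)*d) * (assoc c (e*c) d)⁻¹) * (assoc e c d)⁻¹ := (hA1.merge _ _).symm
    _ = (((c*(e*c))*d) * (assoc c (e*c) d)⁻¹) * (assoc e c d)⁻¹ := by rw [flex hM c e]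
    _ = (c*((e*c)*d)) * (assoc e c d)⁻¹ := by rw [← expand_assoc' c (e*c) d]
    _ = c*(((e*c)*d) * (assoc e c d)⁻¹) := (hA1.pullL _ _).symm
    _ = c*(e*(c*d)) := by rw [← expand_assoc' e c d]
    _ = ((c*e)*c)*d := leftM hM c d e
  have h1 : (assoc c (e*c) d)⁻¹ * (assoc e c d)⁻¹ = 1 := eq_one_of_self_mul key
  have h2' : (assoc e c d * assoc c (e*c) d)⁻¹ = 1 := by rw [mul_inv_rev']; exact h1
  calc assoc e c d * assoc c (e*c) d = ((assoc e c d * assoc c (e*c) d)⁻¹)⁻¹ := (inv_inv' _).symm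
  _ = 1 := by rw [h2']; simp

theorem F4L (hM : IsMoufang L) (h2 : ClassTwo L) (c d e : L) :
    assoc c e (c*d) * assoc (c*e) c d = 1 := by
  have hA1 := inCenter_inv (h2.2 (c*e) c d)
  have key : (((c*e)*c)*d) * ((assoc (c*e) c d)⁻¹ * (assoc c e (c*d))⁻¹) = ((c*e)*c)*d := by
    calc (((c*e)*c)*d) * ((assoc (c*e) c d)⁻¹ * (assoc c e (c*d))⁻¹)
        = ((((c*e)*c)*d) * (assoc (c*e) c d)⁻¹) * (assoc c e (c*d))⁻¹ :=
          ((inCenter_inv (h2.2 c e (c*d))).merge _ _).symm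
    _ = ((c*e)*(c*d)) * (assoc c e (c*d))⁻¹ := by rw [← expand_assoc' (c*e) c d]
    _ = c*(e*(c*d)) := by rw [← expand_assoc' c e (c*d)]
    _ = ((c*e)*c)*d := leftM hM c d e
  have h1 : (assoc (c*e) c d)⁻¹ * (assoc c e (c*d))⁻¹ = 1 := eq_one_of_self_mul key
  have h2' : (assoc c e (c*d) * assoc (c*e) c d)⁻¹ = 1 := by rw [mul_inv_rev']; exact h1
  calc assoc c e (c*d) * assoc (c*e) c d
      = ((assoc c e (c*d) * assoc (c*e) c d)⁻¹)⁻¹ := (inv_inv' _).symm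
  _ = 1 := by rw [h2']; simp

theorem CLL (h2 : ClassTwo L) (c d e f : L) :
    assoc c d (e*f) * assoc (c*d) e f = assoc d e f * (assoc c (d*e) f * assoc c d e) := by
  have hA1 := h2.2 c d (e*f)
  have hA3 := h2.2 d e f
  have hA5 := h2.2 c d e
  apply central_cancel (W := c*(d*(e*f)))
  have route1 : ((c*d)*e)*f = (c*(d*(e*f))) * (assoc c d (e*f) * assoc (c*d) e f) := by
    calc ((c*d)*e)*f = ((c*d)*(e*f)) * assoc (c*d) e f := expand_assoc (c*d) e f
    _ = ((c*(d*(e*f))) * assoc c d (e*f)) * assoc (c*d) e f := by rw [expand_assoc c d (e*f)]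
    _ = (c*(d*(e*f))) * (assoc c d (e*f) * assoc (c*d) e f) := (h2.2 (c*d) e f).merge _ _
  have route2 : ((c*d)*e)*f
      = (c*(d*(e*f))) * (assoc d e f * (assoc c (d*e) f * assoc c d e)) := by
    calc ((c*d)*e)*f = ((c*(d*e)) * assoc c d e)*f := by rw [expand_assoc c d e]
    _ = ((c*(d*e))*f) * assoc c d e := hA5.swapR _ _
    _ = ((c*((d*e)*f)) * assoc c (d*e) f) * assoc c d e := by rw [expand_assoc c (d*e) f]
    _ = (c*((d*e)*f)) * (assoc c (d*e) f * assoc c d e) := hA5.merge _ _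
    _ = (c*((d*(e*f)) * assoc d e f)) * (assoc c (d*e) f * assoc c d e) := by
          rw [← expand_assoc d e f]
    _ = ((c*(d*(e*f))) * assoc d e f) * (assoc c (d*e) f * assoc c d e) := by
          rw [hA3.pullL c (d*(e*f))]
    _ = (c*(d*(e*f))) * (assoc d e f * (assoc c (d*e) f * assoc c d e)) :=
          (inCenter_mul (h2.2 c (d*e) f) (h2.2 c d e)).merge _ _
  rw [← route1, route2]

theorem KrawL (h2 : ClassTwo L) (c d e : L) :
    comm c (d*e) =
      (assoc d e c)⁻¹ * (comm c e * (assoc d c e * (comm c d * (assoc c d e)⁻¹))) := by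
  have hAdec := inCenter_inv (h2.2 d e c)
  have hKce := h2.1 c e
  have hAdce := h2.2 d c e
  have hKcd := h2.1 c d
  have hAcde := inCenter_inv (h2.2 c d e)
  apply central_cancel (W := (d*e)*c)
  have pathB : c*(d*e) = ((d*e)*c) *
      ((assoc d e c)⁻¹ * (comm c e * (assoc d c e * (comm c d * (assoc c d e)⁻¹)))) := by
    calc c*(d*e) = ((c*d)*e) * (assoc c d e)⁻¹ := expand_assoc' c d e
    _ = (((d*c) * comm c d)*e) * (assoc c d e)⁻¹ := by rw [← expand_comm c d]
    _ = (((d*c)*e) * comm c d) * (assoc c d e)⁻¹ := by rw [hKcd.swapR]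
    _ = (((d*c)*e)) * (comm c d * (assoc c d e)⁻¹) := hAcde.merge _ _
    _ = ((d*(c*e)) * assoc d c e) * (comm c d * (assoc c d e)⁻¹) := by rw [expand_assoc d c e]
    _ = (d*(c*e)) * (assoc d c e * (comm c d * (assoc c d e)⁻¹)) :=
          (inCenter_mul hKcd hAcde).merge _ _
    _ = (d*((e*c) * comm c e)) * (assoc d c e * (comm c d * (assoc c d e)⁻¹)) := by
          rw [← expand_comm c e]
    _ = ((d*(e*c)) * comm c e) * (assoc d c e * (comm c d * (assoc c d e)⁻¹)) := by
          rw [hKce.pullL]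
    _ = (d*(e*c)) * (comm c e * (assoc d c e * (comm c d * (assoc c d e)⁻¹))) :=
          (inCenter_mul hAdce (inCenter_mul hKcd hAcde)).merge _ _
    _ = (((d*e)*c) * (assoc d e c)⁻¹) *
          (comm c e * (assoc d c e * (comm c d * (assoc c d e)⁻¹))) := by
          rw [← expand_assoc' d e c]
    _ = ((d*e)*c) * ((assoc d e c)⁻¹ *
          (comm c e * (assoc d c e * (comm c d * (assoc c d e)⁻¹)))) :=
          (inCenter_mul hKce (inCenter_mul hAdce (inCenter_mul hKcd hAcde))).merge _ _
  rw [← pathB, ← expand_comm c (d*e)]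

end withM
end MoufangL

end IPLoop

namespace IPLoop

variable {L : Type*} [IPLoop L]

section CenGroup

instance : CommGroup {z : L // inCenter z} where
  mul a b := ⟨a.1 * b.1, inCenter_mul a.2 b.2⟩
  one := ⟨1, inCenter_one⟩
  inv a := ⟨a.1⁻¹, inCenter_inv a.2⟩
  mul_assoc a b c := Subtype.ext (a.2.assocL b.1 c.1)
  one_mul a := Subtype.ext (one_mul a.1)
  mul_one a := Subtype.ext (mul_one a.1)
  inv_mul_cancel a := Subtype.ext (inv_mul_cancel' a.1)
  mul_comm a b := Subtype.ext (a.2.comm b.1)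

@[simp] theorem cen_mul_coe (a b : {z : L // inCenter z}) : ((a * b : _) : L) = a.1 * b.1 := rfl
@[simp] theorem cen_inv_coe (a : {z : L // inCenter z}) : ((a⁻¹ : _) : L) = (a.1)⁻¹ := rfl
@[simp] theorem cen_one_coe : (((1 : {z : L // inCenter z})) : L) = 1 := rfl

theorem cen_coe_pow (v : {z : L // inCenter z}) (n : ℕ) : ((v ^ n : _) : L) = (v.1) ^ n := by
  induction n with
  | zero => rfl
  | succ k ih =>
    have h1 : v ^ (k+1) = v ^ k * v := pow_succ v k
    have h2 : (v.1 : L) ^ (k+1) = v.1 * v.1 ^ k := rfl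
    rw [h1, h2, cen_mul_coe, ih]
    have hc : inCenter ((v.1)^k) := by
      clear h1 h2 ih
      induction k with
      | zero => exact inCenter_one
      | succ m ihm =>
        have : (v.1) ^ (m+1) = v.1 * (v.1)^m := rfl
        rw [this]; exact inCenter_mul v.2 ihm
    exact (hc.comm v.1).symm ▸ (hc.comm v.1) ▸ rfl

end CenGroup

section QuotGroup

def cSetoid (L : Type*) [IPLoop L] : Setoid L where
  r x y := ∃ z, inCenter z ∧ y = x * z
  iseqv := by
    constructor
    · intro x; exact ⟨1, inCenter_one, by simp⟩
    · rintro x y ⟨z, hz, rfl⟩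
      exact ⟨z⁻¹, inCenter_inv hz, by simp⟩
    · rintro x y w ⟨z, hz, rfl⟩ ⟨z', hz', rfl⟩
      exact ⟨z * z', inCenter_mul hz hz', (hz'.merge x z)⟩

def Qt (L : Type*) [IPLoop L] (_h2 : ClassTwo L) : Type _ := Quotient (cSetoid L)

variable {h2 : ClassTwo L}

instance (h2 : ClassTwo L) : CommGroup (Qt L h2) where
  mul := Quotient.map₂ (· * ·) (by
    rintro x x' ⟨z, hz, rfl⟩ y y' ⟨w, hw, rfl⟩
    refine ⟨z * w, inCenter_mul hz hw, ?_⟩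
    calc (x*z)*(y*w) = ((x*z)*y)*w := (hw.pullL _ _)
    _ = ((x*y)*z)*w := by rw [hz.swapR]
    _ = (x*y)*(z*w) := hw.merge (x*y) z)
  one := Quotient.mk _ 1
  inv := Quotient.map (·⁻¹) (by
    rintro x x' ⟨z, hz, rfl⟩
    refine ⟨z⁻¹, inCenter_inv hz, ?_⟩
    show (x*z)⁻¹ = x⁻¹ * z⁻¹
    rw [mul_inv_rev']
    exact ((inCenter_inv hz).comm _))
  mul_assoc := by
    rintro ⟨a⟩ ⟨b⟩ ⟨c⟩
    exact Quotient.sound ⟨(assoc a b c)⁻¹, inCenter_inv (h2.2 a b c), expand_assoc' a b c⟩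
  one_mul := by rintro ⟨a⟩; exact Quotient.sound ⟨1, inCenter_one, by simp⟩
  mul_one := by rintro ⟨a⟩; exact Quotient.sound ⟨1, inCenter_one, by simp⟩
  inv_mul_cancel := by rintro ⟨a⟩; exact Quotient.sound ⟨1, inCenter_one, by simp⟩
  mul_comm := by
    rintro ⟨a⟩ ⟨b⟩
    exact Quotient.sound ⟨comm b a, h2.1 b a, expand_comm b a⟩

def piQ (h2 : ClassTwo L) (x : L) : Qt L h2 := Quotient.mk _ x

@[simp] theorem piQ_mul (x y : L) : piQ h2 (x * y) = piQ h2 x * piQ h2 y := rfl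
@[simp] theorem piQ_inv (x : L) : piQ h2 x⁻¹ = (piQ h2 x)⁻¹ := rfl
@[simp] theorem piQ_one : piQ h2 (1 : L) = 1 := rfl

theorem piQ_exact {x y : L} (h : piQ h2 x = piQ h2 y) : ∃ z, inCenter z ∧ y = x * z :=
  Quotient.exact h

theorem assoc_congr (h2 : ClassTwo L) {a a' b b' c c' : L}
    (ha : piQ h2 a = piQ h2 a') (hb : piQ h2 b = piQ h2 b') (hc : piQ h2 c = piQ h2 c') :
    assoc a b c = assoc a' b' c' := by
  obtain ⟨z1, hz1, rfl⟩ := piQ_exact ha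
  obtain ⟨z2, hz2, rfl⟩ := piQ_exact hb
  obtain ⟨z3, hz3, rfl⟩ := piQ_exact hc
  rw [assoc_shift1 hz1, assoc_shift2 hz2, assoc_shift3 hz3]

theorem comm_congr (h2 : ClassTwo L) {a a' b b' : L}
    (ha : piQ h2 a = piQ h2 a') (hb : piQ h2 b = piQ h2 b') :
    comm a b = comm a' b' := by
  obtain ⟨z1, hz1, rfl⟩ := piQ_exact ha
  obtain ⟨z2, hz2, rfl⟩ := piQ_exact hb
  rw [comm_shift1 hz1, comm_shift2 hz2]

end QuotGroup

end IPLoop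

namespace IPLoop

variable {L : Type*} [IPLoop L]

section ZPhase

variable (h2 : ClassTwo L)

def AstZ (h2 : ClassTwo L) (c d e : L) : {z : L // inCenter z} := ⟨assoc c d e, h2.2 c d e⟩

theorem AstZ_congr {a a' b b' c c' : L}
    (ha : piQ h2 a = piQ h2 a') (hb : piQ h2 b = piQ h2 b') (hc : piQ h2 c = piQ h2 c') :
    AstZ h2 a b c = AstZ h2 a' b' c' :=
  Subtype.ext (assoc_congr h2 ha hb hc)

theorem F1Z (hM : IsMoufang L) (c d e : L) : AstZ h2 e c d * AstZ h2 c (e*c) d = 1 :=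
  Subtype.ext (F1L hM h2 c d e)

theorem F2Z (hM : IsMoufang L) (c d e : L) : AstZ h2 d (c*e) c * AstZ h2 d c e = 1 :=
  Subtype.ext (F2L hM h2 c d e)

theorem F3Z (hM : IsMoufang L) (c d e : L) : AstZ h2 d c (e*c) * AstZ h2 (d*c) e c = 1 :=
  Subtype.ext (F3L hM h2 c d e)

theorem F4Z (hM : IsMoufang L) (c d e : L) : AstZ h2 c e (c*d) * AstZ h2 (c*e) c d = 1 :=
  Subtype.ext (F4L hM h2 c d e)

theorem sw23 (hM : IsMoufang L) (x y z : L) : AstZ h2 x y z = (AstZ h2 x z y)⁻¹ := by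
  set P := z⁻¹*((y⁻¹*x)*(y*z)) with hP
  have s1 : AstZ h2 x y z = (AstZ h2 y (y⁻¹*x) (y*z))⁻¹ := by
    have h := F4Z h2 hM y z (y⁻¹*x)
    rw [mul_inv_cancel_left''] at h
    exact eq_inv_of_mul_eq_one_right h
  have s2 : AstZ h2 y (y⁻¹*x) (y*z) = (AstZ h2 z⁻¹ (y*z) ((y⁻¹*x)*(y*z)))⁻¹ := by
    have h := F3Z h2 hM (y*z) z⁻¹ (y⁻¹*x)
    have g : AstZ h2 (z⁻¹*(y*z)) (y⁻¹*x) (y*z) = AstZ h2 y (y⁻¹*x) (y*z) := by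
      apply AstZ_congr <;>
        simp [piQ_mul, piQ_inv, mul_comm, mul_left_comm, mul_assoc]
    rw [g] at h
    exact eq_inv_of_mul_eq_one_right h
  have s3 : AstZ h2 z⁻¹ (y*z) ((y⁻¹*x)*(y*z))
      = (AstZ h2 z⁻¹ ((y⁻¹*x)*(y*z)) (x⁻¹*y))⁻¹ := by
    have h := F2Z h2 hM ((y⁻¹*x)*(y*z)) z⁻¹ (x⁻¹*y)
    have g : AstZ h2 z⁻¹ (((y⁻¹*x)*(y*z))*(x⁻¹*y)) ((y⁻¹*x)*(y*z))
        = AstZ h2 z⁻¹ (y*z) ((y⁻¹*x)*(y*z)) := by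
      apply AstZ_congr <;>
        simp [piQ_mul, piQ_inv, mul_comm, mul_left_comm, mul_assoc]
    rw [g] at h
    exact eq_inv_of_mul_eq_one_left h
  have s4 : AstZ h2 z⁻¹ ((y⁻¹*x)*(y*z)) (x⁻¹*y)
      = (AstZ h2 ((y⁻¹*x)*(y*z)) P (x⁻¹*y))⁻¹ := by
    have h := F1Z h2 hM ((y⁻¹*x)*(y*z)) (x⁻¹*y) z⁻¹
    rw [← hP] at h
    exact eq_inv_of_mul_eq_one_left h
  have s5 : AstZ h2 ((y⁻¹*x)*(y*z)) P (x⁻¹*y) = (AstZ h2 x z y)⁻¹ := by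
    have h := F4Z h2 hM P (x⁻¹*y) z
    have g1 : AstZ h2 (P*z) P (x⁻¹*y) = AstZ h2 ((y⁻¹*x)*(y*z)) P (x⁻¹*y) := by
      apply AstZ_congr <;>
        simp [hP, piQ_mul, piQ_inv, mul_comm, mul_left_comm, mul_assoc]
    have g2 : AstZ h2 P z (P*(x⁻¹*y)) = AstZ h2 x z y := by
      apply AstZ_congr <;>
        simp [hP, piQ_mul, piQ_inv, mul_comm, mul_left_comm, mul_assoc]
    rw [g1, g2] at h
    exact eq_inv_of_mul_eq_one_right h
  rw [s1, s2, s3, s4, s5]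
  simp

theorem sw12 (hM : IsMoufang L) (x y z : L) : AstZ h2 x y z = (AstZ h2 y x z)⁻¹ := by
  set M := ((x*y)*(z*y⁻¹))*((x*y)⁻¹*y) with hMdef
  have t1 : AstZ h2 x y z = (AstZ h2 (x*y) (z*y⁻¹) y)⁻¹ := by
    have h := F3Z h2 hM y x (z*y⁻¹)
    rw [inv_mul_cancel_right''] at h
    exact eq_inv_of_mul_eq_one_left h
  have t2 : AstZ h2 (x*y) (z*y⁻¹) y
      = (AstZ h2 ((x*y)*(z*y⁻¹)) (x*y) ((x*y)⁻¹*y))⁻¹ := by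
    have h := F4Z h2 hM (x*y) ((x*y)⁻¹*y) (z*y⁻¹)
    rw [mul_inv_cancel_left''] at h
    exact eq_inv_of_mul_eq_one_left h
  have t3 : AstZ h2 ((x*y)*(z*y⁻¹)) (x*y) ((x*y)⁻¹*y)
      = (AstZ h2 (y*z⁻¹) ((x*y)*(z*y⁻¹)) ((x*y)⁻¹*y))⁻¹ := by
    have h := F1Z h2 hM ((x*y)*(z*y⁻¹)) ((x*y)⁻¹*y) (y*z⁻¹)
    have g : AstZ h2 ((x*y)*(z*y⁻¹)) ((y*z⁻¹)*((x*y)*(z*y⁻¹))) ((x*y)⁻¹*y)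
        = AstZ h2 ((x*y)*(z*y⁻¹)) (x*y) ((x*y)⁻¹*y) := by
      apply AstZ_congr <;>
        simp [piQ_mul, piQ_inv, mul_comm, mul_left_comm, mul_assoc]
    rw [g] at h
    exact eq_inv_of_mul_eq_one_right h
  have t4 : AstZ h2 (y*z⁻¹) ((x*y)*(z*y⁻¹)) ((x*y)⁻¹*y)
      = (AstZ h2 (y*z⁻¹) M ((x*y)*(z*y⁻¹)))⁻¹ := by
    have h := F2Z h2 hM ((x*y)*(z*y⁻¹)) (y*z⁻¹) ((x*y)⁻¹*y)
    rw [← hMdef] at h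
    exact eq_inv_of_mul_eq_one_right h
  have t5 : AstZ h2 (y*z⁻¹) M ((x*y)*(z*y⁻¹)) = (AstZ h2 y x z)⁻¹ := by
    have h := F3Z h2 hM M (y*z⁻¹) x
    have g1 : AstZ h2 (y*z⁻¹) M (x*M) = AstZ h2 (y*z⁻¹) M ((x*y)*(z*y⁻¹)) := by
      apply AstZ_congr <;>
        simp [hMdef, piQ_mul, piQ_inv, mul_comm, mul_left_comm, mul_assoc]
    have g2 : AstZ h2 ((y*z⁻¹)*M) x M = AstZ h2 y x z := by
      apply AstZ_congr <;>
        simp [hMdef, piQ_mul, piQ_inv, mul_comm, mul_left_comm, mul_assoc]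
    rw [g1, g2] at h
    exact eq_inv_of_mul_eq_one_left h
  rw [t1, t2, t3, t4, t5]
  simp

end ZPhase

end IPLoop

namespace IPLoop

variable {L : Type*} [IPLoop L]

theorem helperAdd {A : Type*} [AddCommGroup A] {p q r s : A}
    (h : p = q) (key : p - q - (r - s) = 0) : r = s := by
  have h1 : p - q = 0 := sub_eq_zero_of_eq h
  rw [h1, zero_sub, neg_eq_zero] at key
  exact sub_eq_zero.mp key

section AddPhase

variable (h2 : ClassTwo L)

def aA (h2 : ClassTwo L) (c d e : L) : Additive {z : L // inCenter z} :=
  Additive.ofMul (AstZ h2 c d e)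

theorem cycZ (hM : IsMoufang L) (c d e : L) : AstZ h2 c d e = AstZ h2 d e c := by
  rw [sw12 h2 hM c d e, sw23 h2 hM d c e]
  simp

theorem cycA (hM : IsMoufang L) (c d e : L) : aA h2 c d e = aA h2 d e c :=
  congrArg Additive.ofMul (cycZ h2 hM c d e)

theorem cyc2A (hM : IsMoufang L) (c d e : L) : aA h2 c d e = aA h2 e c d := by
  rw [cycA h2 hM c d e, cycA h2 hM d e c]

theorem sw23A (hM : IsMoufang L) (c d e : L) : aA h2 c d e = - aA h2 c e d := by
  unfold aA
  rw [sw23 h2 hM c d e]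
  simp

theorem sw12A (hM : IsMoufang L) (c d e : L) : aA h2 c d e = - aA h2 d c e := by
  unfold aA
  rw [sw12 h2 hM c d e]
  simp

theorem arg1A (c d e f : L) : aA h2 (c*d) e f = aA h2 (d*c) e f := by
  unfold aA
  apply congrArg
  apply AstZ_congr
  · simp [piQ_mul, mul_comm]
  · rfl
  · rfl

theorem CLA (c d e f : L) :
    aA h2 c d (e*f) + aA h2 (c*d) e f = aA h2 d e f + (aA h2 c (d*e) f + aA h2 c d e) := by
  unfold aA
  rw [← ofMul_mul, ← ofMul_mul, ← ofMul_mul]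
  exact congrArg Additive.ofMul (Subtype.ext (CLL h2 c d e f))

def DA (h2 : ClassTwo L) (c d e f : L) : Additive {z : L // inCenter z} :=
  aA h2 (c*d) e f - aA h2 c e f - aA h2 d e f

theorem DsymA (c d e f : L) : DA h2 c d e f = DA h2 d c e f := by
  unfold DA
  rw [arg1A h2 c d e f]
  abel

theorem DantiA (hM : IsMoufang L) (c d e f : L) : DA h2 c d e f = - DA h2 c d f e := by
  unfold DA
  rw [sw23A h2 hM (c*d) e f, sw23A h2 hM c e f, sw23A h2 hM d e f]
  abel

theorem CocA (hM : IsMoufang L) (c d e f : L) :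
    DA h2 e f c d + DA h2 c d e f = DA h2 d e f c := by
  have h := CLA h2 c d e f
  rw [cyc2A h2 hM c d (e*f), cycA h2 hM c (d*e) f] at h
  unfold DA
  refine helperAdd h ?_
  rw [cycA h2 hM e c d, cycA h2 hM f c d, cyc2A h2 hM d f c, cyc2A h2 hM e f c]
  abel

theorem SWA (hM : IsMoufang L) (c d e f : L) : DA h2 d e f c = DA h2 f c d e := by
  have k1 := CocA h2 hM c d e f
  have k2 := CocA h2 hM e f c d
  rw [← k1, add_comm]
  exact k2

theorem SWA' (hM : IsMoufang L) (p q r s : L) : DA h2 p q r s = DA h2 r s p q :=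
  SWA h2 hM s p q r

theorem tor3 (hM : IsMoufang L) (c d e f : L) :
    DA h2 c d e f + DA h2 c d e f + DA h2 c d e f = 0 := by
  have e1 : DA h2 c d e f + DA h2 c d e f = DA h2 d e f c := by
    have h := CocA h2 hM c d e f
    rw [SWA' h2 hM e f c d] at h
    exact h
  have e2 : DA h2 d e f c + DA h2 d e f c = DA h2 c d e f := by
    have h := CocA h2 hM d e f c
    rw [SWA' h2 hM f c d e, SWA' h2 hM e f c d] at h
    exact h
  have e4 : (DA h2 c d e f + DA h2 c d e f) + (DA h2 c d e f + DA h2 c d e f)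
      = DA h2 c d e f := by rw [e1]; exact e2
  exact helperAdd e4 (by abel)

end AddPhase

end IPLoop

namespace IPLoop

variable {L : Type*} [IPLoop L]

section AddPhase2

variable (h2 : ClassTwo L)

theorem tor2 (hM : IsMoufang L) (c d e f : L) :
    DA h2 c d e f + DA h2 c d e f = 0 := by
  have e1 : DA h2 c d e f = - DA h2 c d e f := by
    calc DA h2 c d e f = DA h2 e f c d := SWA' h2 hM c d e f
    _ = DA h2 f e c d := DsymA h2 e f c d
    _ = DA h2 c d f e := SWA' h2 hM f e c d
    _ = - DA h2 c d e f := DantiA h2 hM c d f e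
  nth_rewrite 1 [e1]
  abel

theorem Dzero (hM : IsMoufang L) (c d e f : L) : DA h2 c d e f = 0 := by
  have h3 := tor3 h2 hM c d e f
  have h2' := tor2 h2 hM c d e f
  calc DA h2 c d e f
      = (DA h2 c d e f + DA h2 c d e f + DA h2 c d e f)
        - (DA h2 c d e f + DA h2 c d e f) := by abel
  _ = 0 := by rw [h3, h2']; abel

theorem tri1A (hM : IsMoufang L) (c d e f : L) :
    aA h2 (c*d) e f = aA h2 c e f + aA h2 d e f := by
  have h := Dzero h2 hM c d e f
  unfold DA at h
  have := sub_eq_zero.mp (by rw [← h]; abel : aA h2 (c*d) e f - (aA h2 c e f + aA h2 d e f) = 0)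
  exact this

theorem tri1Z (hM : IsMoufang L) (c d e f : L) :
    AstZ h2 (c*d) e f = AstZ h2 c e f * AstZ h2 d e f := by
  have h := tri1A h2 hM c d e f
  unfold aA at h
  rw [← ofMul_mul] at h
  exact Additive.ofMul.injective h

theorem cyc2Z (hM : IsMoufang L) (c d e : L) : AstZ h2 c d e = AstZ h2 e c d := by
  rw [cycZ h2 hM c d e, cycZ h2 hM d e c]

theorem tri3Z (hM : IsMoufang L) (c d e f : L) :
    AstZ h2 c d (e*f) = AstZ h2 c d e * AstZ h2 c d f := by
  rw [cyc2Z h2 hM c d (e*f), tri1Z h2 hM e f c d, cycZ h2 hM e c d, cycZ h2 hM f c d]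

theorem tri2Z (hM : IsMoufang L) (c d e f : L) :
    AstZ h2 c (d*e) f = AstZ h2 c d f * AstZ h2 c e f := by
  rw [cycZ h2 hM c (d*e) f, tri1Z h2 hM d e f c, cyc2Z h2 hM d f c, cyc2Z h2 hM e f c]

theorem AstZ_one1 (d e : L) : AstZ h2 1 d e = 1 := by
  apply Subtype.ext
  show assoc 1 d e = 1
  rw [assoc_eq_one_iff]
  simp

theorem AstZ_one2 (d e : L) : AstZ h2 d 1 e = 1 := by
  apply Subtype.ext
  show assoc d 1 e = 1
  rw [assoc_eq_one_iff]
  simp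

theorem AstZ_one3 (d e : L) : AstZ h2 d e 1 = 1 := by
  apply Subtype.ext
  show assoc d e 1 = 1
  rw [assoc_eq_one_iff]
  simp

theorem inv1Z (hM : IsMoufang L) (c e f : L) :
    AstZ h2 c⁻¹ e f = (AstZ h2 c e f)⁻¹ := by
  have h := tri1Z h2 hM c c⁻¹ e f
  rw [mul_inv_cancel', AstZ_one1] at h
  exact (eq_inv_of_mul_eq_one_right h.symm)

theorem inv2Z (hM : IsMoufang L) (c e f : L) :
    AstZ h2 e c⁻¹ f = (AstZ h2 e c f)⁻¹ := by
  have h := tri2Z h2 hM e c c⁻¹ f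
  rw [mul_inv_cancel', AstZ_one2] at h
  exact (eq_inv_of_mul_eq_one_right h.symm)

theorem inv3Z (hM : IsMoufang L) (c e f : L) :
    AstZ h2 e f c⁻¹ = (AstZ h2 e f c)⁻¹ := by
  have h := tri3Z h2 hM e f c c⁻¹
  rw [mul_inv_cancel', AstZ_one3] at h
  exact (eq_inv_of_mul_eq_one_right h.symm)

/-- the key exponent-6 law -/
theorem astZ_pow6 (hM : IsMoufang L) (c d e : L) : (AstZ h2 c d e) ^ (6:ℕ) = 1 := by
  set a := AstZ h2 c d e with ha
  set k1 : {z : L // inCenter z} := ⟨comm c e, h2.1 c e⟩ with hk1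
  set k2 : {z : L // inCenter z} := ⟨comm c d, h2.1 c d⟩ with hk2
  have hcomm : comm c (d*e) = comm c (e*d) := by
    rw [expand_comm d e, comm_shift2 (h2.1 d e)]
  have hE : (AstZ h2 d e c)⁻¹ * (k1 * (AstZ h2 d c e * (k2 * (AstZ h2 c d e)⁻¹)))
      = (AstZ h2 e d c)⁻¹ * (k2 * (AstZ h2 e c d * (k1 * (AstZ h2 c e d)⁻¹))) := by
    apply Subtype.ext
    show (assoc d e c)⁻¹ * (comm c e * (assoc d c e * (comm c d * (assoc c d e)⁻¹)))
        = (assoc e d c)⁻¹ * (comm c d * (assoc e c d * (comm c e * (assoc c e d)⁻¹)))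
    rw [← KrawL h2 c d e, ← KrawL h2 c e d]
    exact hcomm
  have hdec : AstZ h2 d e c = a := (cycZ h2 hM c d e).symm
  have hdce : AstZ h2 d c e = a⁻¹ := by
    rw [ha]
    exact (sw12 h2 hM d c e)
  have hedc : AstZ h2 e d c = a⁻¹ := by
    rw [sw12 h2 hM e d c, ← hdec]
  have hecd : AstZ h2 e c d = a := by
    rw [cycZ h2 hM e c d, ha]
  have hced : AstZ h2 c e d = a⁻¹ := by
    rw [ha]
    exact sw23 h2 hM c e d
  rw [hdec, hdce, hedc, hecd, hced] at hE
  -- hE : a⁻¹ * (k1 * (a⁻¹ * (k2 * a⁻¹))) = (a⁻¹)⁻¹ * (k2 * (a * (k1 * (a⁻¹)⁻¹)))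
  have e1 : a⁻¹ * (k1 * (a⁻¹ * (k2 * a⁻¹))) = (k1 * k2) * (a⁻¹ * (a⁻¹ * a⁻¹)) := by
    simp [mul_assoc, mul_comm, mul_left_comm]
  have e2 : (a⁻¹)⁻¹ * (k2 * (a * (k1 * (a⁻¹)⁻¹))) = (k1 * k2) * (a * (a * a)) := by
    simp [mul_assoc, mul_comm, mul_left_comm]
  rw [e1, e2] at hE
  have h4 : a⁻¹ * (a⁻¹ * a⁻¹) = a * (a * a) := mul_left_cancel hE
  have key : (a * (a * a)) * (a * (a * a)) = 1 := by
    nth_rewrite 2 [← h4]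
    group
  have h6 : a ^ (6:ℕ) = a*(a*(a*(a*(a*a)))) := by
    rw [pow_succ, pow_succ, pow_succ, pow_succ, pow_succ, pow_one]
    simp [mul_assoc]
  rw [h6]
  simpa [mul_assoc] using key

end AddPhase2

end IPLoop

namespace IPLoop

variable {L : Type*} [IPLoop L]

section Assembly

theorem subset_subloopClosure (S : Set L) : S ⊆ subloopClosure S := by
  intro x hx
  intro T hT
  exact hT.2.2.2 hx

theorem subloopClosure_subset {S T : Set L} (h1 : (1:L) ∈ T)
    (hinv : ∀ x ∈ T, x⁻¹ ∈ T) (hmul : ∀ x ∈ T, ∀ y ∈ T, x * y ∈ T) (hS : S ⊆ T) :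
    subloopClosure S ⊆ T := by
  intro x hx
  exact hx T ⟨h1, hinv, hmul, hS⟩

@[simp] theorem npow_zero' (x : L) : x ^ (0:ℕ) = 1 := rfl
theorem npow_succ' (x : L) (n : ℕ) : x ^ (n+1) = x * x ^ n := rfl

theorem one_npow (n : ℕ) : (1:L) ^ n = 1 := by
  induction n with
  | zero => rfl
  | succ k ih => rw [npow_succ', ih, mul_one]

theorem central_npow {x : L} (hx : inCenter x) (n : ℕ) : inCenter (x ^ n) := by
  induction n with
  | zero => exact inCenter_one
  | succ k ih => rw [npow_succ']; exact inCenter_mul hx ih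

theorem central_mul_npow {x y : L} (hx : inCenter x) (hy : inCenter y) (n : ℕ) :
    (x*y) ^ n = x ^ n * y ^ n := by
  induction n with
  | zero => simp
  | succ k ih =>
    have hxn := central_npow hx k
    have hyn := central_npow hy k
    rw [npow_succ', npow_succ', npow_succ', ih]
    calc (x*y)*(x^k*y^k) = ((x*y)*x^k)*y^k := (hyn.pullL _ _)
    _ = (x*(y*x^k))*y^k := by rw [hx.assocL]
    _ = (x*(x^k*y))*y^k := by rw [hxn.comm y]
    _ = ((x*x^k)*y)*y^k := by rw [hxn.assocM]
    _ = (x*x^k)*(y*y^k) := hyn.merge _ _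

theorem central_inv_npow {x : L} (hx : inCenter x) (n : ℕ) :
    (x⁻¹) ^ n = (x ^ n)⁻¹ := by
  induction n with
  | zero => simp
  | succ k ih =>
    have hxn := central_npow hx k
    rw [npow_succ', npow_succ', ih, ← mul_inv_rev']
    rw [hxn.comm x]

theorem pow_mod6 {G : Type*} [Group G] {g : G} (h : g ^ (6:ℕ) = 1) (n : ℕ) :
    g ^ n = g ^ (n % 6) := by
  conv_lhs => rw [← Nat.mod_add_div n 6]
  rw [pow_add, pow_mul, h, one_pow, _root_.mul_one]

end Assembly

end IPLoop

namespace IPLoop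

theorem closure_subset_range_phi {G : Type*} [CommGroup G] (k : Set G) [Fintype ↥k]
    (h6 : ∀ g ∈ k, g ^ (6:ℕ) = 1) :
    (Subgroup.closure k : Set G) ⊆
      Set.range (fun f : ↥k → ZMod 6 => ∏ g : ↥k, (g : G) ^ (f g).val) := by
  classical
  haveI : Fact (1 < 6) := ⟨by norm_num⟩
  intro v hv
  refine Subgroup.closure_induction ?_ ?_ ?_ ?_ hv
  · intro x hx
    refine ⟨fun h => if h = ⟨x, hx⟩ then 1 else 0, ?_⟩
    show (∏ g : ↥k, (g : G) ^ ((if g = ⟨x, hx⟩ then (1 : ZMod 6) else 0)).val) = x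
    rw [Finset.prod_eq_single (⟨x, hx⟩ : ↥k)]
    · simp [ZMod.val_one]
    · intro g _ hg
      simp [hg, ZMod.val_zero]
    · intro h; exact absurd (Finset.mem_univ _) h
  · refine ⟨0, ?_⟩
    simp [ZMod.val_zero]
  · rintro x y hx hy ⟨f, rfl⟩ ⟨f', rfl⟩
    refine ⟨f + f', ?_⟩
    simp only
    rw [← Finset.prod_mul_distrib]
    apply Finset.prod_congr rfl
    intro g _
    have h6g : (g : G) ^ (6:ℕ) = 1 := h6 g g.2
    rw [Pi.add_apply, ZMod.val_add, ← pow_mod6 h6g, pow_add]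
  · rintro x hx ⟨f, rfl⟩
    refine ⟨-f, ?_⟩
    simp only
    rw [← Finset.prod_inv_distrib]
    apply Finset.prod_congr rfl
    intro g _
    have h6g : (g : G) ^ (6:ℕ) = 1 := h6 g g.2
    have key : (g : G) ^ (f g).val * (g : G) ^ ((-f) g).val = 1 := by
      rw [← pow_add, pow_mod6 h6g, ← ZMod.val_add]
      simp [ZMod.val_zero]
    rw [Pi.neg_apply] at key ⊢
    exact (eq_inv_of_mul_eq_one_right key)

end IPLoop


open IPLoop in
/-- If a Moufang loop of class at most 2 is finitely generated, then the
subloop generated by all associators (the nuclearly-derived subloop `L*`) is a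
finite abelian group of exponent dividing 6, contained in the center; so `L`
is a central extension of the group `L/L*` by a finite group of exponent
dividing 6. -/
theorem stmt7 {L : Type*} [IPLoop L] (hM : IsMoufang L) (h2 : ClassTwo L)
    (hfg : ∃ S : Finset L, subloopClosure (S : Set L) = Set.univ) :
    (subloopClosure {a : L | ∃ c d e : L, a = assoc c d e}).Finite ∧
    (∀ x ∈ subloopClosure {a : L | ∃ c d e : L, a = assoc c d e},
      x ^ (6 : ℕ) = 1) ∧
    (∀ x ∈ subloopClosure {a : L | ∃ c d e : L, a = assoc c d e},
      ∀ y ∈ subloopClosure {a : L | ∃ c d e : L, a = assoc c d e},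
      x * y = y * x) ∧
    (∀ x ∈ subloopClosure {a : L | ∃ c d e : L, a = assoc c d e},
      ∀ y ∈ subloopClosure {a : L | ∃ c d e : L, a = assoc c d e},
      ∀ z ∈ subloopClosure {a : L | ∃ c d e : L, a = assoc c d e},
      (x * y) * z = x * (y * z)) ∧
    (∀ x ∈ subloopClosure {a : L | ∃ c d e : L, a = assoc c d e},
      inCenter x) := by
  classical
  obtain ⟨S, hS⟩ := hfg
  set gen : Set L := {a : L | ∃ c d e : L, a = assoc c d e} with hgen
  -- centrality of the closure
  have hCen : subloopClosure gen ⊆ {x : L | inCenter x} := by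
    apply subloopClosure_subset
    · exact inCenter_one
    · exact fun x hx => inCenter_inv hx
    · exact fun x hx y hy => inCenter_mul hx hy
    · rintro a ⟨c, d, e, rfl⟩; exact h2.2 c d e
  -- the assoc pow-6 law in L
  have hA6 : ∀ c d e : L, (assoc c d e) ^ (6:ℕ) = 1 := by
    intro c d e
    have h := congrArg Subtype.val (astZ_pow6 h2 hM c d e)
    rw [cen_coe_pow] at h
    exact h
  -- exponent 6 of the closure
  have hPow : subloopClosure gen ⊆ {x : L | inCenter x ∧ x ^ (6:ℕ) = 1} := by
    apply subloopClosure_subset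
    · exact ⟨inCenter_one, one_npow 6⟩
    · rintro x ⟨hx, hx6⟩
      refine ⟨inCenter_inv hx, ?_⟩
      rw [central_inv_npow hx, hx6, one_inv']
    · rintro x ⟨hx, hx6⟩ y ⟨hy, hy6⟩
      refine ⟨inCenter_mul hx hy, ?_⟩
      rw [central_mul_npow hx hy, hx6, hy6, mul_one']
    · rintro a ⟨c, d, e, rfl⟩
      exact ⟨h2.2 c d e, hA6 c d e⟩
  -- the finitely generated central subgroup
  set genZ : Set {z : L // inCenter z} :=
    (fun p : L × L × L => AstZ h2 p.1 p.2.1 p.2.2) '' ((S : Set L) ×ˢ (S : Set L) ×ˢ (S : Set L))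
    with hgenZ
  have hgenZfin : genZ.Finite :=
    ((S.finite_toSet.prod (S.finite_toSet.prod S.finite_toSet))).image _
  set H : Subgroup {z : L // inCenter z} := Subgroup.closure genZ with hH
  have hmemuniv : ∀ e : L, e ∈ subloopClosure (S : Set L) := by
    intro e; rw [hS]; trivial
  -- generation, slot 3
  have step3 : ∀ s ∈ (S : Set L), ∀ t ∈ (S : Set L), ∀ e : L, AstZ h2 s t e ∈ H := by
    intro s hs t ht e
    have hsub : subloopClosure (S : Set L) ⊆ {e : L | AstZ h2 s t e ∈ H} := by
      apply subloopClosure_subset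
      · show AstZ h2 s t 1 ∈ H
        rw [AstZ_one3]; exact one_mem H
      · intro x hx
        show AstZ h2 s t x⁻¹ ∈ H
        rw [inv3Z h2 hM]; exact inv_mem hx
      · intro x hx y hy
        show AstZ h2 s t (x*y) ∈ H
        rw [tri3Z h2 hM]; exact mul_mem hx hy
      · intro u hu
        show AstZ h2 s t u ∈ H
        apply Subgroup.subset_closure
        exact ⟨(s, t, u), ⟨hs, ht, hu⟩, rfl⟩
    exact hsub (hmemuniv e)
  -- slot 2
  have step2 : ∀ s ∈ (S : Set L), ∀ d e : L, AstZ h2 s d e ∈ H := by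
    intro s hs d e
    have hsub : subloopClosure (S : Set L) ⊆ {d : L | AstZ h2 s d e ∈ H} := by
      apply subloopClosure_subset
      · show AstZ h2 s 1 e ∈ H
        rw [AstZ_one2]; exact one_mem H
      · intro x hx
        show AstZ h2 s x⁻¹ e ∈ H
        rw [inv2Z h2 hM]; exact inv_mem hx
      · intro x hx y hy
        show AstZ h2 s (x*y) e ∈ H
        rw [tri2Z h2 hM]; exact mul_mem hx hy
      · intro t ht
        exact step3 s hs t ht e
    exact hsub (hmemuniv d)
  -- slot 1
  have step1 : ∀ c d e : L, AstZ h2 c d e ∈ H := by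
    intro c d e
    have hsub : subloopClosure (S : Set L) ⊆ {c : L | AstZ h2 c d e ∈ H} := by
      apply subloopClosure_subset
      · show AstZ h2 1 d e ∈ H
        rw [AstZ_one1]; exact one_mem H
      · intro x hx
        show AstZ h2 x⁻¹ d e ∈ H
        rw [inv1Z h2 hM]; exact inv_mem hx
      · intro x hx y hy
        show AstZ h2 (x*y) d e ∈ H
        rw [tri1Z h2 hM]; exact mul_mem hx hy
      · intro s hs
        exact step2 s hs d e
    exact hsub (hmemuniv c)
  -- H is finite
  haveI : Fintype ↥genZ := hgenZfin.fintype
  have h6 : ∀ g ∈ genZ, g ^ (6:ℕ) = 1 := by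
    rintro g ⟨⟨s, t, u⟩, -, rfl⟩
    exact astZ_pow6 h2 hM s t u
  have hHsub := closure_subset_range_phi genZ h6
  have hHfin : ((H : Set {z : L // inCenter z})).Finite :=
    (Set.finite_range _).subset hHsub
  -- the closure is inside the image of H
  have hsubC : subloopClosure gen ⊆ Subtype.val '' (H : Set {z : L // inCenter z}) := by
    apply subloopClosure_subset
    · exact ⟨1, one_mem H, rfl⟩
    · rintro x ⟨v, hv, rfl⟩
      exact ⟨v⁻¹, inv_mem hv, rfl⟩
    · rintro x ⟨v, hv, rfl⟩ y ⟨w, hw, rfl⟩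
      exact ⟨v * w, mul_mem hv hw, rfl⟩
    · rintro a ⟨c, d, e, rfl⟩
      exact ⟨AstZ h2 c d e, step1 c d e, rfl⟩
  refine ⟨(hHfin.image Subtype.val).subset hsubC, ?_, ?_, ?_, ?_⟩
  · intro x hx; exact (hPow hx).2
  · intro x hx y _; exact (hCen hx).comm y
  · intro x hx y _ z _; exact (hCen hx).assocL y z
  · intro x hx; exact hCen hx
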